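/- arXiv:1211.1953 — 3 statements merged into one kernel-verified Lean document; each statement's English description precedes it below -/
import Mathlib

section
/- In any crystallization C, the numbers of bigons in complementary pairs of colors coincide: b_01(C) = b_23(C), b_02(C) = b_13(C), and b_03(C) = b_12(C). -/
/-!
We model a (3+1)-graph on a finite nonempty vertex set `V` as a quadruple
`σ : Fin 4 → Equiv.Perm V` of fixed-point-free involutions whose generated
subgroup acts transitively on `V`.
-/

/-- `f` is a fixed-point-free involution. -/
def IsFPFInvolution {V : Type*} (f : Equiv.Perm V) : Prop :=
  (∀ x, f x ≠ x) ∧ ∀ x, f (f x) = x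

/-- `x` and `y` lie in the same `I`-residue: `y` is in the orbit of `x` under the
subgroup generated by the permutations of the colors in `I`. -/
def SameResidue {V : Type*} (σ : Fin 4 → Equiv.Perm V) (I : Set (Fin 4)) (x y : V) : Prop :=
  ∃ g ∈ Subgroup.closure (σ '' I), g x = y

/-- The set of `I`-residues (orbits on `V` of the subgroup generated by the
permutations of colors in `I`). -/
def residues {V : Type*} (σ : Fin 4 → Equiv.Perm V) (I : Set (Fin 4)) : Set (Set V) :=
  {O | ∃ x, O = {y | SameResidue σ I x y}}

/-- The number of `I`-residues. -/
noncomputable def numResidues {V : Type*} (σ : Fin 4 → Equiv.Perm V) (I : Set (Fin 4)) : ℕ :=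
  (residues σ I).ncard

/-- A (3+1)-graph: four fixed-point-free involutions generating a subgroup that acts
transitively on the vertex set. -/
def IsGraph31 {V : Type*} (σ : Fin 4 → Equiv.Perm V) : Prop :=
  (∀ c, IsFPFInvolution (σ c)) ∧ ∀ x y : V, SameResidue σ Set.univ x y

/-- `b(G)`: total number of bigons (`ij`-gons over the six unordered pairs of colors). -/
noncomputable def bCount {V : Type*} (σ : Fin 4 → Equiv.Perm V) : ℕ :=
  ∑ p ∈ Finset.univ.filter (fun p : Fin 4 × Fin 4 => p.1 < p.2),
    numResidues σ ({p.1, p.2} : Set (Fin 4))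

/-- `t(G)`: total number of 3-residues over the four 3-element subsets of colors. -/
noncomputable def tCount {V : Type*} (σ : Fin 4 → Equiv.Perm V) : ℕ :=
  ∑ c : Fin 4, numResidues σ (({c}ᶜ : Set (Fin 4)))

/-- A 3-gem: a (3+1)-graph with `v(G) + t(G) = b(G)`. -/
def IsGem {V : Type*} [Fintype V] (σ : Fin 4 → Equiv.Perm V) : Prop :=
  IsGraph31 σ ∧ Fintype.card V + tCount σ = bCount σ

/-- A crystallization: a 3-gem with no 1-dipoles, i.e. for every color `c` and vertex `x`,
the vertices `x` and `σ c x` lie in the same `({0,1,2,3} \ {c})`-residue. -/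
def IsCrystallization {V : Type*} [Fintype V] (σ : Fin 4 → Equiv.Perm V) : Prop :=
  IsGem σ ∧ ∀ (c : Fin 4) (x : V), SameResidue σ (({c}ᶜ : Set (Fin 4))) x (σ c x)

/-!
Connectedness and the absence of 1-dipoles make every 3-residue of a crystallization the whole
vertex set, so `t = 4` and `b = v + 4`. For fixed-point-free involutions `α, β, γ` generating a
transitive group, Euler's inequality for the surface they span reads
`2 (b_αβ + b_αγ + b_βγ) ≤ v + 4`. We prove it with permutations: `α` reverses the cycles of
`α * β` and never maps one onto itself, so `2 b_αβ` is at most the number of cycles of `α * β`;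
the products `α * β, β * γ, γ * α` multiply to `1` and generate a subgroup with at most two orbits;
and `c x + c y + c z ≤ v + 2 c ⟨x, y, z⟩` whenever `x * y * z = 1`, where `c` counts cycles or
orbits. The latter follows by writing `x, y, z` as products of `v - c` transpositions and tracking
the effect of each transposition on cycles and on orbits. Summing the four triple inequalities
gives `2 b ≤ 2 v + 8 = 2 b`, so all four are equalities, and subtracting them pairwise yields
`b_ij = b_kl`.
-/

open MulAction Equiv Subgroup
open scoped Pointwise

section Orbits

variable {V : Type*}

lemma mem_orbit_iff_exists_perm {H : Subgroup (Perm V)} {x y : V} :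
    y ∈ orbit H x ↔ ∃ g ∈ H, g x = y := by
  simp [MulAction.mem_orbit_iff, Subgroup.smul_def, Perm.smul_def]

lemma apply_mem_orbit {H : Subgroup (Perm V)} {g : Perm V} (hg : g ∈ H) (x : V) :
    g x ∈ orbit H x :=
  mem_orbit_iff_exists_perm.2 ⟨g, hg, rfl⟩

lemma orbit_subset_orbit_of_le {H K : Subgroup (Perm V)} (h : H ≤ K) (x : V) :
    orbit H x ⊆ orbit K x := fun _ hy ↦ by
  obtain ⟨g, hg, rfl⟩ := mem_orbit_iff_exists_perm.1 hy
  exact apply_mem_orbit (h hg) x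

lemma mem_orbit_zpowers_iff {g : Perm V} {x y : V} :
    y ∈ orbit (zpowers g) x ↔ g.SameCycle x y := by
  simp [mem_orbit_iff_exists_perm, Subgroup.mem_zpowers_iff, Perm.SameCycle]

lemma mem_stabilizer_orbit {H : Subgroup (Perm V)} {g : Perm V} (hg : ∀ y, g y ∈ orbit H y)
    (x : V) : g ∈ stabilizer (Perm V) (orbit H x) := by
  refine mem_stabilizer_set.2 fun y ↦ ?_
  rw [Perm.smul_def, ← orbit_eq_iff, ← orbit_eq_iff, orbit_eq_iff.2 (hg y)]

lemma le_stabilizer_orbit (H : Subgroup (Perm V)) (x : V) :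
    H ≤ stabilizer (Perm V) (orbit H x) :=
  fun _ hg ↦ mem_stabilizer_orbit (apply_mem_orbit hg) x

lemma le_stabilizer_orbit_union (H : Subgroup (Perm V)) (x y : V) :
    H ≤ stabilizer (Perm V) (orbit H x ∪ orbit H y) :=
  le_trans (le_inf (le_stabilizer_orbit H x) (le_stabilizer_orbit H y))
    stabilizer_inf_stabilizer_le_stabilizer_union

lemma swap_mem_stabilizer [DecidableEq V] {a b : V} {T : Set V} (h : a ∈ T ↔ b ∈ T) :
    swap a b ∈ stabilizer (Perm V) T := by
  refine mem_stabilizer_set.2 fun x ↦ ?_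
  rw [Perm.smul_def]
  rcases eq_or_ne x a with rfl | hxa
  · rw [swap_apply_left, h]
  rcases eq_or_ne x b with rfl | hxb
  · rw [swap_apply_right, h]
  · rw [swap_apply_of_ne_of_ne hxa hxb]

lemma mem_of_le_stabilizer {H : Subgroup (Perm V)} {T : Set V} (hT : H ≤ stabilizer (Perm V) T)
    {x y : V} (hx : x ∈ T) (hy : y ∈ orbit H x) : y ∈ T := by
  obtain ⟨g, hg, rfl⟩ := mem_orbit_iff_exists_perm.1 hy
  exact (mem_stabilizer_set.1 (hT hg) x).2 hx

noncomputable def numOrbits (H : Subgroup (Perm V)) : ℕ :=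
  Nat.card (orbitRel.Quotient H V)

lemma mk_eq_mk_iff {H : Subgroup (Perm V)} {x y : V} :
    (⟦x⟧ : orbitRel.Quotient H V) = ⟦y⟧ ↔ x ∈ orbit H y :=
  Quotient.eq.trans orbitRel_apply

lemma numOrbits_bot : numOrbits (⊥ : Subgroup (Perm V)) = Nat.card V := by
  refine (Nat.card_eq_of_bijective
    (fun x : V ↦ (⟦x⟧ : orbitRel.Quotient (⊥ : Subgroup (Perm V)) V))
    ⟨fun x y h ↦ ?_, Quotient.mk_surjective⟩).symm
  obtain ⟨g, hg, rfl⟩ := mem_orbit_iff_exists_perm.1 (mk_eq_mk_iff.1 h)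
  rw [(Subgroup.mem_bot).1 hg, Perm.one_apply]

def orbitsMap {H K : Subgroup (Perm V)} (h : ∀ x : V, orbit H x ⊆ orbit K x) :
    orbitRel.Quotient H V → orbitRel.Quotient K V :=
  Quotient.map id fun _ y hxy ↦ orbitRel_apply.2 (h y (orbitRel_apply.1 hxy))

lemma orbitsMap_surjective {H K : Subgroup (Perm V)} (h : ∀ x : V, orbit H x ⊆ orbit K x) :
    Function.Surjective (orbitsMap h) :=
  Quotient.ind fun x ↦ ⟨⟦x⟧, rfl⟩

variable [Finite V]

lemma numOrbits_le_of_orbit_subset {H K : Subgroup (Perm V)} (h : ∀ x : V, orbit H x ⊆ orbit K x) :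
    numOrbits K ≤ numOrbits H :=
  Nat.card_le_card_of_surjective _ (orbitsMap_surjective h)

lemma numOrbits_antitone {H K : Subgroup (Perm V)} (h : H ≤ K) : numOrbits K ≤ numOrbits H :=
  numOrbits_le_of_orbit_subset (orbit_subset_orbit_of_le h)

lemma numOrbits_add_one_le {H K : Subgroup (Perm V)} (h : H ≤ K) {a b : V}
    (hK : b ∈ orbit K a) (hH : b ∉ orbit H a) : numOrbits K + 1 ≤ numOrbits H := by
  have := Fintype.ofFinite (orbitRel.Quotient H V)
  have := Fintype.ofFinite (orbitRel.Quotient K V)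
  have hf := orbitsMap_surjective (orbit_subset_orbit_of_le h)
  have hnf : ¬ Function.Injective (orbitsMap (orbit_subset_orbit_of_le h)) := fun hinj ↦
    hH (mk_eq_mk_iff.1 (hinj (a₁ := ⟦b⟧) (a₂ := ⟦a⟧) (mk_eq_mk_iff.2 hK)))
  simpa [numOrbits, Nat.card_eq_fintype_card] using
    Fintype.card_lt_of_surjective_not_injective _ hf hnf

end Orbits

section Swap

variable {V : Type*} [DecidableEq V]

lemma closure_insert_swap_le_stabilizer {S : Set (Perm V)} {T : Set V}
    (hS : closure S ≤ stabilizer (Perm V) T) {a b : V} (hab : a ∈ T ↔ b ∈ T) :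
    closure (insert (swap a b) S) ≤ stabilizer (Perm V) T :=
  (closure_le _).2 <| Set.insert_subset_iff.2
    ⟨swap_mem_stabilizer hab, fun _ hs ↦ hS (Subgroup.subset_closure hs)⟩

lemma orbit_closure_insert_swap_subset {S : Set (Perm V)} {a b : V}
    (hab : b ∈ orbit (closure S) a) (x : V) :
    orbit (closure (insert (swap a b) S)) x ⊆ orbit (closure S) x := fun _ hy ↦
  mem_of_le_stabilizer (closure_insert_swap_le_stabilizer (le_stabilizer_orbit _ x)
    (by rw [← orbit_eq_iff, ← orbit_eq_iff, orbit_eq_iff.2 hab])) (mem_orbit_self x) hy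

lemma mem_orbit_of_mem_orbit_insert_swap {S : Set (Perm V)} {a b z w : V}
    (hza : z ∉ orbit (closure S) a) (hwa : w ∉ orbit (closure S) a)
    (hw : w ∈ orbit (closure (insert (swap a b) S)) z) : w ∈ orbit (closure S) z := by
  set H := closure S
  by_cases hzb : z ∈ orbit H b
  · have hT := closure_insert_swap_le_stabilizer (le_stabilizer_orbit_union H a b)
      (iff_of_true (Or.inl (mem_orbit_self a)) (Or.inr (mem_orbit_self b)))
    have hwb : w ∈ orbit H b := (mem_of_le_stabilizer hT (Or.inr hzb) hw).resolve_left hwa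
    rw [← orbit_eq_iff] at hzb hwb ⊢
    rw [hzb, hwb]
  · refine mem_of_le_stabilizer (closure_insert_swap_le_stabilizer (le_stabilizer_orbit H z)
      (iff_of_false (fun h ↦ hza (mem_orbit_symm.1 h)) (fun h ↦ hzb (mem_orbit_symm.1 h))))
      (mem_orbit_self z) hw

variable [Finite V]

lemma numOrbits_closure_insert_swap {S : Set (Perm V)} {a b : V}
    (hab : b ∈ orbit (closure S) a) :
    numOrbits (closure (insert (swap a b) S)) = numOrbits (closure S) :=
  le_antisymm (numOrbits_antitone (closure_mono (Set.subset_insert _ _)))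
    (numOrbits_le_of_orbit_subset (orbit_closure_insert_swap_subset hab))

lemma numOrbits_closure_le_insert_swap (S : Set (Perm V)) (a b : V) :
    numOrbits (closure S) ≤ numOrbits (closure (insert (swap a b) S)) + 1 := by
  classical
  set H := closure S
  set K := closure (insert (swap a b) S)
  have hHK : H ≤ K := closure_mono (Set.subset_insert _ _)
  let F (q : orbitRel.Quotient H V) : Option (orbitRel.Quotient K V) :=
    if q = ⟦a⟧ then none else some (orbitsMap (orbit_subset_orbit_of_le hHK) q)
  have hF : F.Injective := by
    intro q q'
    induction q using Quotient.inductionOn with | h z =>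
    induction q' using Quotient.inductionOn with | h w =>
    by_cases hz : z ∈ orbit H a <;> by_cases hw : w ∈ orbit H a <;>
      simp [F, mk_eq_mk_iff, hz, hw]
    · rw [← orbit_eq_iff] at hz hw ⊢
      rw [hz, hw]
    · exact fun h ↦ mem_orbit_symm.1
        (mem_orbit_of_mem_orbit_insert_swap hz hw (mem_orbit_symm.1 (mk_eq_mk_iff.1 h)))
  simpa [numOrbits, Finite.card_option] using Nat.card_le_card_of_injective F hF

end Swap

section Cycles

variable {V : Type*}

-- Fixed points count as cycles.
noncomputable def numCycles (g : Perm V) : ℕ :=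
  numOrbits (zpowers g)

lemma numCycles_one : numCycles (1 : Perm V) = Nat.card V := by
  rw [numCycles, zpowers_one_eq_bot, numOrbits_bot]

variable [Finite V]

lemma numCycles_le_card (g : Perm V) : numCycles g ≤ Nat.card V :=
  numOrbits_bot (V := V) ▸ numOrbits_antitone bot_le

variable [DecidableEq V]

lemma sameCycle_swap_mul_of_not_sameCycle {g : Perm V} {a b : V} (h : ¬ g.SameCycle a b) :
    (swap a b * g).SameCycle a b := by
  have hpow : ∀ n : ℕ, (swap a b * g).SameCycle a ((g ^ n) a) := by
    intro n
    induction n with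
    | zero => exact Perm.SameCycle.refl _ _
    | succ n ih =>
      rw [pow_succ', Perm.mul_apply]
      have hb : g ((g ^ n) a) ≠ b := fun hb ↦ h <| hb ▸
        Perm.sameCycle_apply_right.2 (Perm.sameCycle_pow_right.2 (Perm.SameCycle.refl g a))
      rcases eq_or_ne (g ((g ^ n) a)) a with ha | ha
      · rw [ha]
      · have : (swap a b * g) ((g ^ n) a) = g ((g ^ n) a) := by
          rw [Perm.mul_apply, swap_apply_of_ne_of_ne ha hb]
        exact this ▸ Perm.sameCycle_apply_right.2 ih
  -- the cycle of `a` under `swap a b * g` follows that of `g` up to `g⁻¹ a`, which it sends to `b`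
  obtain ⟨n, hn⟩ := (Perm.sameCycle_symm_apply_right.2 (Perm.SameCycle.refl g a)).exists_nat_pow_eq
  have h1 : (swap a b * g).SameCycle a (g.symm a) := hn ▸ hpow n
  exact h1.trans ⟨1, by simp⟩

lemma numCycles_swap_mul_add_one_le {g : Perm V} {a b : V} (h : ¬ g.SameCycle a b) :
    numCycles (swap a b * g) + 1 ≤ numCycles g := by
  have hab : b ∈ orbit (closure {swap a b * g}) a := by
    rw [← zpowers_eq_closure, mem_orbit_zpowers_iff]
    exact sameCycle_swap_mul_of_not_sameCycle h
  rw [numCycles, zpowers_eq_closure, ← numOrbits_closure_insert_swap hab, numCycles]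
  have hswap : swap a b ∈ closure (insert (swap a b) {swap a b * g}) :=
    Subgroup.subset_closure (Set.mem_insert _ _)
  have hg := mul_mem hswap (Subgroup.subset_closure (Set.mem_insert_of_mem _ rfl))
  rw [swap_mul_self_mul] at hg
  exact numOrbits_add_one_le (zpowers_le.2 hg) (by simpa using apply_mem_orbit hswap a)
    (by rwa [mem_orbit_zpowers_iff])

lemma numCycles_swap_mul_le (g : Perm V) (a b : V) :
    numCycles (swap a b * g) ≤ numCycles g + 1 := by
  have hg := mul_mem (Subgroup.subset_closure (Set.mem_insert (swap a b) {swap a b * g}))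
    (Subgroup.subset_closure (Set.mem_insert_of_mem _ rfl))
  rw [swap_mul_self_mul] at hg
  calc numCycles (swap a b * g) = numOrbits (closure {swap a b * g}) := by
        rw [numCycles, zpowers_eq_closure]
    _ ≤ numOrbits (closure (insert (swap a b) {swap a b * g})) + 1 :=
        numOrbits_closure_le_insert_swap _ a b
    _ ≤ numCycles g + 1 := by gcongr; exact numOrbits_antitone (zpowers_le.2 hg)

lemma exists_isSwap_prod_eq (g : Perm V) :
    ∃ L : List (Perm V), (∀ τ ∈ L, τ.IsSwap) ∧ L.prod = g ∧
      L.length + numCycles g ≤ Nat.card V := by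
  induction h : Nat.card V - numCycles g using Nat.strong_induction_on generalizing g with
  | _ m ih =>
  by_cases hg : g = 1
  · exact ⟨[], by simp, by simp [hg], by simp [hg, numCycles_one]⟩
  obtain ⟨a, ha⟩ : ∃ a, g a ≠ a := not_forall.1 fun h ↦ hg (Perm.ext h)
  set g' := swap a (g a) * g
  have hcut : numCycles g + 1 ≤ numCycles g' := by
    have hfix : Function.IsFixedPt g' a := by simp [g', Function.IsFixedPt]
    simpa [g', swap_mul_self_mul] using
      numCycles_swap_mul_add_one_le fun h' ↦ ha (h'.eq_of_left hfix).symm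
  obtain ⟨L, hL, hprod, hlen⟩ := ih _ (by have := numCycles_le_card g'; omega) g' rfl
  refine ⟨swap a (g a) :: L, List.forall_mem_cons.2 ⟨⟨a, g a, ha.symm, rfl⟩, hL⟩, ?_, ?_⟩
  · rw [List.prod_cons, hprod, swap_mul_self_mul]
  · rw [List.length_cons]
    omega

end Cycles

section Genus

variable {V : Type*} [Finite V] [DecidableEq V]

lemma numCycles_prod_add_card_le :
    ∀ L : List (Perm V), (∀ τ ∈ L, τ.IsSwap) →
      numCycles L.prod + Nat.card V ≤ L.length + 2 * numOrbits (closure {τ | τ ∈ L})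
  | [], _ => by simp [numCycles_one, numOrbits_bot, two_mul]
  | τ :: L, hL => by
    -- a transposition joining two orbits of `⟨L⟩` also joins two cycles of `L.prod`
    obtain ⟨a, b, -, rfl⟩ := hL τ List.mem_cons_self
    have ih := numCycles_prod_add_card_le L fun σ hσ ↦ hL σ (List.mem_cons_of_mem _ hσ)
    rw [List.prod_cons, List.setOfPred_mem_cons, List.length_cons]
    by_cases hab : b ∈ orbit (closure {τ | τ ∈ L}) a
    · have := numCycles_swap_mul_le L.prod a b
      rw [numOrbits_closure_insert_swap hab]
      omega
    · have hle : zpowers L.prod ≤ closure {τ | τ ∈ L} :=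
        zpowers_le.2 (list_prod_mem fun σ hσ ↦ Subgroup.subset_closure hσ)
      have hprod : ¬ L.prod.SameCycle a b := fun h ↦
        hab (orbit_subset_orbit_of_le hle a (mem_orbit_zpowers_iff.2 h))
      have := numCycles_swap_mul_add_one_le hprod
      have := numOrbits_closure_le_insert_swap {τ | τ ∈ L} a b
      omega

theorem numCycles_add_add_le_of_mul_mul_eq_one {x y z : Perm V} (h : x * y * z = 1) :
    numCycles x + numCycles y + numCycles z ≤
      Nat.card V + 2 * numOrbits (closure {x, y, z}) := by
  obtain ⟨Lx, hx, rfl, hLx⟩ := exists_isSwap_prod_eq x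
  obtain ⟨Ly, hy, rfl, hLy⟩ := exists_isSwap_prod_eq y
  obtain ⟨Lz, hz, rfl, hLz⟩ := exists_isSwap_prod_eq z
  set L := Lx ++ Ly ++ Lz
  have hL := numCycles_prod_add_card_le L (by simp only [L, List.forall_mem_append]; tauto)
  have hprod : L.prod = 1 := by simp only [L, List.prod_append, h]
  have hle : closure {Lx.prod, Ly.prod, Lz.prod} ≤ closure {τ | τ ∈ L} := by
    refine (closure_le _).2 ?_
    rintro _ (rfl | rfl | rfl) <;>
      exact list_prod_mem fun σ hσ ↦ Subgroup.subset_closure (by simp [L, hσ])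
  have := numOrbits_antitone hle
  rw [hprod, numCycles_one, List.length_append, List.length_append] at hL
  omega

end Genus

section Involutions

variable {V : Type*}

lemma IsFPFInvolution.mul_self {α : Perm V} (hα : IsFPFInvolution α) : α * α = 1 :=
  Perm.ext hα.2

lemma IsFPFInvolution.not_sameCycle_mul_apply {α β : Perm V} (hα : IsFPFInvolution α)
    (hβ : IsFPFInvolution β) (x : V) : ¬ (α * β).SameCycle x (α x) := by
  rintro ⟨k, hk⟩
  have hsemi : SemiconjBy α (α * β) (α * β)⁻¹ := by
    rw [SemiconjBy, mul_inv_rev, inv_mul_cancel_right, ← mul_assoc, hα.mul_self, one_mul,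
      inv_eq_of_mul_eq_one_right hβ.mul_self]
  have hconj (j : ℤ) (y : V) : α (((α * β) ^ j) y) = ((α * β) ^ (-j)) (α y) := by
    have := congrArg (· y) (hsemi.zpow_right j)
    simp only [Perm.mul_apply] at this
    rwa [zpow_neg, ← inv_zpow]
  -- if `(α * β) ^ k` sends `x` to `α x`, then `α` (`k` even) or `β` (`k` odd) fixes
  -- `(α * β) ^ (k / 2) x`
  obtain ⟨m, rfl | rfl⟩ := Int.even_or_odd' k
  · apply hα.1 (((α * β) ^ m) x)
    rw [hconj, ← hk, ← Perm.mul_apply, ← zpow_add]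
    congr 2
    ring
  · apply hβ.1 (((α * β) ^ m) x)
    apply α.injective
    rw [hconj, ← hk, ← Perm.mul_apply α β, ← Perm.mul_apply, ← zpow_one_add, ← Perm.mul_apply,
      ← zpow_add]
    congr 2
    ring

lemma two_mul_numOrbits_closure_pair_le [Finite V] {α β : Perm V} (hα : IsFPFInvolution α)
    (hβ : IsFPFInvolution β) : 2 * numOrbits (closure {α, β}) ≤ numCycles (α * β) := by
  set H := closure {α, β}
  have hαH : α ∈ H := Subgroup.subset_closure (Set.mem_insert _ _)
  have hsub := orbit_subset_orbit_of_le
    (zpowers_le.2 (mul_mem hαH (Subgroup.subset_closure (Set.mem_insert_of_mem _ rfl))))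
  have hrep (q : orbitRel.Quotient H V) (s : Bool) :
      (⟦bif s then q.out else α q.out⟧ : orbitRel.Quotient H V) = q := by
    conv_rhs => rw [← Quotient.out_eq q]
    cases s
    · exact mk_eq_mk_iff.2 (apply_mem_orbit hαH _)
    · rfl
  let F (p : orbitRel.Quotient H V × Bool) : orbitRel.Quotient (zpowers (α * β)) V :=
    ⟦bif p.2 then p.1.out else α p.1.out⟧
  have hF : F.Injective := by
    rintro ⟨q, s⟩ ⟨q', s'⟩ h
    obtain rfl : q = q' := by
      rw [← hrep q s, ← hrep q' s']
      exact mk_eq_mk_iff.2 (hsub _ (mk_eq_mk_iff.1 h))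
    have hne := hα.not_sameCycle_mul_apply hβ q.out
    cases s <;> cases s' <;>
      simp only [F, cond_true, cond_false, mk_eq_mk_iff, mem_orbit_zpowers_iff] at h
    · rfl
    · exact absurd h hne
    · exact absurd h.symm hne
    · rfl
  simpa [numCycles, numOrbits, mul_comm] using Nat.card_le_card_of_injective F hF

end Involutions

section ThreeInvolutions

variable {V : Type*} {α β γ : Perm V}

lemma mem_stabilizer_of_mul_self {δ : Perm V} (hδ : δ * δ = 1) {T : Set V}
    (h : ∀ x ∈ T, δ x ∈ T) : δ ∈ stabilizer (Perm V) T :=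
  mem_stabilizer_set.2 fun x ↦ ⟨fun hx ↦ by simpa [← Perm.mul_apply, hδ] using h _ hx, h x⟩

lemma conj_mem_closure_mul (hα : α * α = 1) (hβ : β * β = 1) (hγ : γ * γ = 1) {e : Perm V}
    (he : e ∈ closure {α * β, β * γ, γ * α}) : α * e * α⁻¹ ∈ closure {α * β, β * γ, γ * α} := by
  set E := closure {α * β, β * γ, γ * α}
  have hgen : E.map (MulAut.conj α).toMonoidHom ≤ E := by
    rw [MonoidHom.map_closure, closure_le]
    have hαβ : α * β ∈ E := Subgroup.subset_closure (by simp)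
    have hβγ : β * γ ∈ E := Subgroup.subset_closure (by simp)
    have hγα : γ * α ∈ E := Subgroup.subset_closure (by simp)
    rintro _ ⟨s, hs, rfl⟩
    simp only [MulEquiv.coe_toMonoidHom, MulAut.conj_apply, SetLike.mem_coe,
      inv_eq_of_mul_eq_one_right hα]
    rcases hs with rfl | rfl | rfl
    · convert inv_mem hαβ using 1
      rw [mul_inv_rev, inv_eq_of_mul_eq_one_right hα, inv_eq_of_mul_eq_one_right hβ,
        ← mul_assoc, hα, one_mul]
    · convert mul_mem hαβ hγα using 1
      group
    · convert inv_mem hγα using 1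
      rw [mul_inv_rev, inv_eq_of_mul_eq_one_right hα, inv_eq_of_mul_eq_one_right hγ, mul_assoc,
        mul_assoc, hα, mul_one]
  exact hgen (mem_map_of_mem _ he)

lemma numOrbits_closure_mul_le_two [Finite V] (hα : α * α = 1) (hβ : β * β = 1)
    (hγ : γ * γ = 1) (htr : ∀ x y : V, y ∈ orbit (closure {α, β, γ}) x) :
    numOrbits (closure {α * β, β * γ, γ * α}) ≤ 2 := by
  set E := closure {α * β, β * γ, γ * α}
  rcases isEmpty_or_nonempty V with hV | ⟨⟨v⟩⟩
  · simp [numOrbits]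
  set T := orbit E v ∪ orbit E (α v)
  have hET : E ≤ stabilizer (Perm V) T := le_stabilizer_orbit_union E v (α v)
  have hαT : ∀ x ∈ T, α x ∈ T := by
    rintro x (hx | hx) <;> obtain ⟨e, he, rfl⟩ := mem_orbit_iff_exists_perm.1 hx
    · exact Or.inr (mem_orbit_iff_exists_perm.2 ⟨_, conj_mem_closure_mul hα hβ hγ he, by simp⟩)
    · refine Or.inl (mem_orbit_iff_exists_perm.2 ⟨_, conj_mem_closure_mul hα hβ hγ he, ?_⟩)
      simp [inv_eq_of_mul_eq_one_right hα]
  -- `β = (β * α) * α` and `β * α ∈ E`, and likewise for `γ`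
  have hδT {δ : Perm V} (hδ : δ * δ = 1) (hδα : δ * α ∈ E) : δ ∈ stabilizer (Perm V) T :=
    mem_stabilizer_of_mul_self hδ fun x hx ↦ by
      simpa [← Perm.mul_apply, mul_assoc, hα] using (mem_stabilizer_set.1 (hET hδα) _).2 (hαT x hx)
  have hβα : β * α ∈ E := by
    simpa [inv_eq_of_mul_eq_one_right hα, inv_eq_of_mul_eq_one_right hβ] using
      inv_mem (Subgroup.subset_closure (by simp) : α * β ∈ E)
  have hγα : γ * α ∈ E := Subgroup.subset_closure (by simp)
  have hGT : closure {α, β, γ} ≤ stabilizer (Perm V) T := by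
    rw [closure_le]
    rintro _ (rfl | rfl | rfl)
    · exact mem_stabilizer_of_mul_self hα hαT
    · exact hδT hβ hβα
    · exact hδT hγ hγα
  have hsurj : Function.Surjective fun s : Bool ↦
      (⟦bif s then v else α v⟧ : orbitRel.Quotient E V) := by
    refine Quotient.ind fun y ↦ ?_
    rcases mem_of_le_stabilizer hGT (Or.inl (mem_orbit_self v)) (htr v y) with hy | hy
    · exact ⟨true, (mk_eq_mk_iff.2 hy).symm⟩
    · exact ⟨false, (mk_eq_mk_iff.2 hy).symm⟩
  simpa [numOrbits] using Nat.card_le_card_of_surjective _ hsurj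

theorem two_mul_numOrbits_pairs_le [Finite V] (hα : IsFPFInvolution α)
    (hβ : IsFPFInvolution β) (hγ : IsFPFInvolution γ)
    (htr : ∀ x y : V, y ∈ orbit (closure {α, β, γ}) x) :
    2 * (numOrbits (closure {α, β}) + numOrbits (closure {α, γ}) +
      numOrbits (closure {β, γ})) ≤ Nat.card V + 4 := by
  classical
  have hαβ := two_mul_numOrbits_closure_pair_le hα hβ
  have hβγ := two_mul_numOrbits_closure_pair_le hβ hγ
  have hγα := two_mul_numOrbits_closure_pair_le hγ hα
  have hgenus := numCycles_add_add_le_of_mul_mul_eq_one (x := α * β) (y := β * γ) (z := γ * α)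
    (by simp [mul_assoc, ← mul_assoc β β, ← mul_assoc γ γ, hβ.mul_self, hγ.mul_self,
      hα.mul_self])
  have heven := numOrbits_closure_mul_le_two hα.mul_self hβ.mul_self hγ.mul_self htr
  rw [Set.pair_comm] at hγα
  omega

end ThreeInvolutions

section Residues

variable {V : Type*} (σ : Fin 4 → Perm V)

lemma sameResidue_iff {I : Set (Fin 4)} {x y : V} :
    SameResidue σ I x y ↔ y ∈ orbit (closure (σ '' I)) x :=
  mem_orbit_iff_exists_perm.symm

lemma numResidues_eq_numOrbits (I : Set (Fin 4)) :
    numResidues σ I = numOrbits (closure (σ '' I)) := by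
  have : residues σ I = Set.range (orbitRel.Quotient.orbit (G := closure (σ '' I)) (α := V)) := by
    ext O
    simp only [residues, sameResidue_iff, Set.ofPred_mem_eq, Set.mem_ofPred_eq, Set.mem_range]
    constructor
    · rintro ⟨x, rfl⟩
      exact ⟨⟦x⟧, rfl⟩
    · rintro ⟨q, rfl⟩
      induction q using Quotient.inductionOn with | h x => exact ⟨x, rfl⟩
  rw [numResidues, this, Set.ncard_range_of_injective orbitRel.Quotient.orbit_injective,
    numOrbits]

lemma numResidues_eq_one [Nonempty V] {I : Set (Fin 4)} (h : ∀ x y, SameResidue σ I x y) :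
    numResidues σ I = 1 := by
  have : residues σ I = {Set.univ} := by
    ext O
    simp only [residues, Set.mem_ofPred_eq, Set.mem_singleton_iff]
    exact ⟨fun ⟨x, hx⟩ ↦ hx ▸ Set.eq_univ_of_forall (h x),
      fun hO ↦ ⟨Classical.arbitrary V, hO ▸ (Set.eq_univ_of_forall (h _)).symm⟩⟩
  rw [numResidues, this, Set.ncard_singleton]

lemma sameResidue_compl {c : Fin 4} (hconn : ∀ x y, SameResidue σ Set.univ x y)
    (hc : ∀ x, SameResidue σ {c}ᶜ x (σ c x)) (x y : V) : SameResidue σ {c}ᶜ x y := by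
  simp only [sameResidue_iff] at hconn hc ⊢
  have hle : closure (σ '' Set.univ) ≤ stabilizer (Perm V) (orbit (closure (σ '' {c}ᶜ)) x) := by
    rw [closure_le]
    rintro _ ⟨d, -, rfl⟩
    refine mem_stabilizer_orbit (fun z ↦ ?_) x
    rcases eq_or_ne d c with rfl | hd
    · exact hc z
    · exact apply_mem_orbit (Subgroup.subset_closure (Set.mem_image_of_mem σ hd)) z
  exact mem_of_le_stabilizer hle (mem_orbit_self x) (hconn x y)

lemma two_mul_numResidues_pairs_le [Finite V] (hσ : ∀ c, IsFPFInvolution (σ c)) {c i j k : Fin 4}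
    (hc : ({c}ᶜ : Set (Fin 4)) = {i, j, k}) (htr : ∀ x y, SameResidue σ {c}ᶜ x y) :
    2 * (numResidues σ {i, j} + numResidues σ {i, k} + numResidues σ {j, k}) ≤
      Nat.card V + 4 := by
  simp only [numResidues_eq_numOrbits, Set.image_pair]
  refine two_mul_numOrbits_pairs_le (hσ i) (hσ j) (hσ k) fun x y ↦ ?_
  have := htr x y
  rwa [sameResidue_iff, hc, Set.image_insert_eq, Set.image_pair] at this

lemma bCount_eq : bCount σ = numResidues σ {0, 1} + numResidues σ {0, 2} +
    numResidues σ {0, 3} + numResidues σ {1, 2} + numResidues σ {1, 3} + numResidues σ {2, 3} := by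
  simp [bCount, Finset.sum_filter, Fintype.sum_prod_type, Fin.sum_univ_four]
  ring

end Residues

/-- In any crystallization `C`, the numbers of bigons in complementary
pairs of colors coincide: `b₀₁(C) = b₂₃(C)`, `b₀₂(C) = b₁₃(C)`, `b₀₃(C) = b₁₂(C)`. -/
theorem complementary_bigons {V : Type*} [Fintype V] [Nonempty V]
    (σ : Fin 4 → Equiv.Perm V) (hC : IsCrystallization σ) :
    numResidues σ ({0, 1} : Set (Fin 4)) = numResidues σ ({2, 3} : Set (Fin 4)) ∧
    numResidues σ ({0, 2} : Set (Fin 4)) = numResidues σ ({1, 3} : Set (Fin 4)) ∧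
    numResidues σ ({0, 3} : Set (Fin 4)) = numResidues σ ({1, 2} : Set (Fin 4)) := by
  obtain ⟨⟨⟨hinv, hconn⟩, hgem⟩, hdip⟩ := hC
  have htr (c : Fin 4) := sameResidue_compl σ hconn (hdip c)
  have ht : tCount σ = 4 := by simp [tCount, numResidues_eq_one σ (htr _)]
  have h0 := two_mul_numResidues_pairs_le σ hinv (c := 0) (i := 1) (j := 2) (k := 3)
    (by ext x; fin_cases x <;> simp) (htr 0)
  have h1 := two_mul_numResidues_pairs_le σ hinv (c := 1) (i := 0) (j := 2) (k := 3)
    (by ext x; fin_cases x <;> simp) (htr 1)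
  have h2 := two_mul_numResidues_pairs_le σ hinv (c := 2) (i := 0) (j := 1) (k := 3)
    (by ext x; fin_cases x <;> simp) (htr 2)
  have h3 := two_mul_numResidues_pairs_le σ hinv (c := 3) (i := 0) (j := 1) (k := 2)
    (by ext x; fin_cases x <;> simp) (htr 3)
  rw [ht, bCount_eq, ← Nat.card_eq_fintype_card] at hgem
  omega
end

section
/- Let G be a bipartite 3-gem, let (i,j,k) be a permutation of (1,2,3), and let {u,v} be a j-twistor of G. Then the ji-twisting of G at {u,v} is again a bipartite 3-gem: the new quadruple consists of fixed-point-free involutions whose generated subgroup acts transitively on V, the relation v+t=b still holds for the new graph, and the same parity map exhibits it as bipartite. -/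
/-- `{u, v}` is a `t`-twistor of the bipartite gem `σ` (with parity map `ε`), where
`a`, `b` are the other two nonzero colors: `u ≠ v` have equal parity, lie in the same
`{0,t}`-residue and the same `{a,b}`-residue, and in distinct `{0,a}`-, `{t,b}`-,
`{0,b}`- and `{t,a}`-residues. -/
def IsTwistor {V : Type*} (σ : Fin 4 → Equiv.Perm V) (ε : V → ZMod 2)
    (t a b : Fin 4) (u v : V) : Prop :=
  u ≠ v ∧ ε u = ε v ∧
  SameResidue σ ({0, t} : Set (Fin 4)) u v ∧
  SameResidue σ ({a, b} : Set (Fin 4)) u v ∧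
  ¬ SameResidue σ ({0, a} : Set (Fin 4)) u v ∧
  ¬ SameResidue σ ({t, b} : Set (Fin 4)) u v ∧
  ¬ SameResidue σ ({0, b} : Set (Fin 4)) u v ∧
  ¬ SameResidue σ ({t, a} : Set (Fin 4)) u v

/-- The `ji`-twisting at `{u,v}`: replace `σ i` by `τ ∘ σ i ∘ τ` and `σ j` by
`τ ∘ σ j ∘ τ`, where `τ` is the transposition exchanging `u` and `v`; the other two
permutations are unchanged. -/
def jiTwisting {V : Type*} [DecidableEq V] (σ : Fin 4 → Equiv.Perm V)
    (i j : Fin 4) (u v : V) : Fin 4 → Equiv.Perm V :=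
  fun c => if c = i ∨ c = j then Equiv.swap u v * σ c * Equiv.swap u v else σ c

/-!
Twisting at `{u, v}` only re-pairs the `i`- and `j`-edges at `u` and `v`. Hence, for any set of
colors `I` in which `u` and `v` are connected after the twisting, the `I`-residues of the twisted
graph are those of `G` with the residues of `u` and `v` merged; since twisting is an involution,
the same holds with the two graphs exchanged.

For two colors `c`, `d` with only `d` twisted, the `{c, d}`-residues meet the parity class of `u`
in the cycles of `σ c * σ d`, and the twisting turns this permutation into `σ c * σ d * (u v)` on
that class. Multiplying by a transposition splits the cycle through both points or merges the
cycles through each, so the twistor conditions merge the `0i`- and `jk`-gons and split the `0j`-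
and `ik`-gons at `u`, `v`, while the `0k`-gons are untouched and the `ij`-gons are relabelled by
`(u v)`: `b` is unchanged. Every triple of colors contains a pair connecting `u` and `v` both
before and after the twisting, so `t` is unchanged too, and so is connectedness.
-/

namespace Equiv.Perm

variable {α : Type*} {f g : Perm α} {x y z : α}

theorem SameCycle.exists_least_pos_pow_eq [Finite α] (h : f.SameCycle x z) :
    ∃ m, 0 < m ∧ (f ^ m) x = z ∧ ∀ k, 0 < k → k < m → (f ^ k) x ≠ z := by
  classical
  have hex : ∃ m, 0 < m ∧ (f ^ m) x = z := by
    obtain ⟨m, hm, -, hmz⟩ := h.exists_pow_eq''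
    exact ⟨m, hm, hmz⟩
  exact ⟨Nat.find hex, (Nat.find_spec hex).1, (Nat.find_spec hex).2,
    fun k hk hkm hkz => Nat.find_min hex hkm ⟨hk, hkz⟩⟩

theorem SameCycle.eq_of_invariant [Finite α] {β : Type*} {φ : α → β} (hφ : ∀ z, φ (f z) = φ z)
    (h : f.SameCycle x y) : φ x = φ y := by
  obtain ⟨n, rfl⟩ := h.exists_nat_pow_eq
  clear h
  induction n with
  | zero => rfl
  | succ n ih => rw [pow_succ', mul_apply, hφ, ih]

theorem sameCycle_iff_of_eqOn [Finite α] {s : Set α} (hs : Set.MapsTo f s s)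
    (hfg : Set.EqOn f g s) (hx : x ∈ s) : f.SameCycle x y ↔ g.SameCycle x y := by
  have key : ∀ n : ℕ, (f ^ n) x = (g ^ n) x ∧ (f ^ n) x ∈ s := by
    intro n
    induction n with
    | zero => exact ⟨rfl, hx⟩
    | succ n ih =>
      rw [pow_succ', pow_succ', mul_apply, mul_apply]
      exact ⟨by rw [hfg ih.2, ih.1], hs ih.2⟩
  constructor
  · intro h
    obtain ⟨n, rfl⟩ := h.exists_nat_pow_eq
    rw [(key n).1]
    exact sameCycle_pow_right.2 (SameCycle.refl g x)
  · intro h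
    obtain ⟨n, rfl⟩ := h.exists_nat_pow_eq
    rw [← (key n).1]
    exact sameCycle_pow_right.2 (SameCycle.refl f x)

variable [DecidableEq α]

theorem mul_swap_pow_succ_apply_right {n : ℕ}
    (h : ∀ k, 0 < k → k ≤ n → (f ^ k) x ≠ x ∧ (f ^ k) x ≠ y) :
    ((f * swap x y) ^ (n + 1)) y = (f ^ (n + 1)) x := by
  induction n with
  | zero => simp
  | succ n ih =>
    rw [pow_succ' (f * swap x y), mul_apply, ih fun k hk hkn => h k hk (by omega), mul_apply,
      swap_apply_of_ne_of_ne (h (n + 1) (by omega) le_rfl).1 (h (n + 1) (by omega) le_rfl).2,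
      ← mul_apply, ← pow_succ']

theorem sameCycle_mul_swap_of_not_sameCycle [Finite α] (h : ¬ f.SameCycle x y) :
    (f * swap x y).SameCycle x y := by
  obtain ⟨_ | n, hp, hpx, hmin⟩ := (SameCycle.refl f x).exists_least_pos_pow_eq
  · omega
  have hret : ((f * swap x y) ^ (n + 1)) y = x := by
    rw [mul_swap_pow_succ_apply_right, hpx]
    exact fun k hk hkn =>
      ⟨hmin k hk (by omega), fun hky => h (hky ▸ sameCycle_pow_right.2 (.refl f x))⟩
  exact SameCycle.symm ⟨(n + 1 : ℕ), by rw [zpow_natCast, hret]⟩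

theorem not_sameCycle_mul_swap_of_sameCycle [Finite α] (hxy : x ≠ y) (h : f.SameCycle x y) :
    ¬ (f * swap x y).SameCycle x y := by
  -- the orbit of `y` under `f * swap x y` is `f x, f^2 x, …, f^m x = y`, which avoids `x`
  obtain ⟨m, hm, hmy, hmin⟩ := h.exists_least_pos_pow_eq
  have hfree : ∀ k, 0 < k → k < m → (f ^ k) x ≠ x ∧ (f ^ k) x ≠ y := by
    refine fun k hk hkm => ⟨fun hkx => hmin (m - k) (by omega) (by omega) ?_, hmin k hk hkm⟩
    conv_lhs => rw [← hkx, ← mul_apply, ← pow_add, Nat.sub_add_cancel hkm.le]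
    exact hmy
  have hpow : ∀ r, 0 < r → r ≤ m → ((f * swap x y) ^ r) y = (f ^ r) x := by
    rintro (_ | r) hr hrm
    · omega
    · exact mul_swap_pow_succ_apply_right fun k hk hkr => hfree k hk (by omega)
  have hper : Function.IsPeriodicPt (f * swap x y) m y := by
    rw [Function.IsPeriodicPt, Function.IsFixedPt, ← coe_pow, hpow m hm le_rfl, hmy]
  intro hg
  obtain ⟨N, hN⟩ := hg.symm.exists_nat_pow_eq
  rw [coe_pow] at hN
  have hr := (hper.iterate_mod_apply N).trans hN
  rw [← coe_pow] at hr
  rcases Nat.eq_zero_or_pos (N % m) with h0 | hpos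
  · rw [h0, pow_zero, one_apply] at hr
    exact hxy hr.symm
  · exact (hfree _ hpos (Nat.mod_lt _ hm)).1 (by rw [← hpow _ hpos (Nat.mod_lt _ hm).le, hr])

theorem sameCycle_mul_swap_iff [Finite α] (hxy : x ≠ y) :
    (f * swap x y).SameCycle x y ↔ ¬ f.SameCycle x y :=
  ⟨fun hg h => not_sameCycle_mul_swap_of_sameCycle hxy h hg, sameCycle_mul_swap_of_not_sameCycle⟩

end Equiv.Perm

namespace Setoid

variable {α β : Type*} (r : Setoid α) (u v : α)

def merge : Setoid α where
  r x y := r x y ∨ ((r x u ∨ r x v) ∧ (r y u ∨ r y v))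
  iseqv := by
    refine ⟨fun x => Or.inl (r.refl' x), ?_, ?_⟩
    · rintro x y (h | ⟨hx, hy⟩)
      exacts [Or.inl (r.symm' h), Or.inr ⟨hy, hx⟩]
    · rintro x y z (hxy | ⟨hx, hy⟩) (hyz | ⟨hy', hz⟩)
      · exact Or.inl (r.trans' hxy hyz)
      · exact Or.inr ⟨hy'.imp (r.trans' hxy) (r.trans' hxy), hz⟩
      · exact Or.inr ⟨hx, hy.imp (r.trans' (r.symm' hyz)) (r.trans' (r.symm' hyz))⟩
      · exact Or.inr ⟨hx, hz⟩

variable {r u v}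

theorem le_merge : r ≤ r.merge u v := fun _ _ h => Or.inl h

theorem merge_rel_left_right : r.merge u v u v := Or.inr ⟨Or.inl (r.refl' u), Or.inr (r.refl' v)⟩

theorem merge_le {s : Setoid α} (hrs : r ≤ s) (huv : s u v) : r.merge u v ≤ s := by
  have hP : ∀ {x}, r x u ∨ r x v → s x u := by
    rintro x (h | h)
    exacts [hrs h, s.trans' (hrs h) (s.symm' huv)]
  rintro x y (h | ⟨hx, hy⟩)
  exacts [hrs h, s.trans' (hP hx) (s.symm' (hP hy))]

theorem merge_eq_self (h : r u v) : r.merge u v = r :=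
  le_antisymm (merge_le le_rfl h) le_merge

theorem class_eq_of_rel {x y : α} (h : r x y) : {z | r z x} = {z | r z y} :=
  Set.ext fun _ => ⟨fun hz => r.trans' hz h, fun hz => r.trans' hz (r.symm' h)⟩

theorem merge_class_of_rel {y : α} (hy : r y u ∨ r y v) :
    {x | r.merge u v x y} = {x | r x u} ∪ {x | r x v} :=
  Set.ext fun _ => ⟨fun hxy => hxy.elim (fun h => hy.imp (r.trans' h) (r.trans' h)) And.left,
    fun hx => Or.inr ⟨hx, hy⟩⟩

theorem merge_class_of_not_rel {y : α} (hy : ¬(r y u ∨ r y v)) :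
    {x | r.merge u v x y} = {x | r x y} :=
  Set.ext fun _ => ⟨fun hxy => hxy.resolve_right (hy ·.2), Or.inl⟩

theorem classes_merge : (r.merge u v).classes =
    insert ({x | r x u} ∪ {x | r x v}) (r.classes \ {{x | r x u}, {x | r x v}}) := by
  ext s
  constructor
  · rintro ⟨y, rfl⟩
    by_cases hy : r y u ∨ r y v
    · exact Or.inl (merge_class_of_rel hy)
    · rw [merge_class_of_not_rel hy]
      refine Or.inr ⟨r.mem_classes y, ?_⟩
      rintro (hA | hB)
      exacts [hy (Or.inl (show y ∈ {x | r x u} from hA ▸ r.refl' y)),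
        hy (Or.inr (show y ∈ {x | r x v} from hB ▸ r.refl' y))]
  · rintro (rfl | ⟨⟨y, rfl⟩, hne⟩)
    · exact ⟨u, (merge_class_of_rel (Or.inl (r.refl' u))).symm⟩
    · refine ⟨y, (merge_class_of_not_rel ?_).symm⟩
      rintro (hy | hy)
      exacts [hne (Or.inl (class_eq_of_rel hy)), hne (Or.inr (class_eq_of_rel hy))]

theorem ncard_classes_merge [Finite α] (h : ¬ r u v) :
    r.classes.ncard = (r.merge u v).classes.ncard + 1 := by
  set A := {x | r x u}
  set B := {x | r x v}
  have hAB : A ≠ B := fun e => h (show u ∈ B from e ▸ r.refl' u)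
  have hAB_mem : A ∪ B ∉ r.classes := by
    rintro ⟨y, hy⟩
    have huy : r u y := show u ∈ {x | r x y} from hy ▸ Or.inl (r.refl' u)
    have hvy : r v y := show v ∈ {x | r x y} from hy ▸ Or.inr (r.refl' v)
    exact h (r.trans' huy (r.symm' hvy))
  have hclasses : r.classes = insert A (insert B (r.classes \ {A, B})) := by
    ext s
    simp only [Set.mem_insert_iff, Set.mem_sdiff, Set.mem_singleton_iff]
    constructor
    · tauto
    · rintro (rfl | rfl | ⟨hs, -⟩)
      exacts [r.mem_classes u, r.mem_classes v, hs]
  have hr : r.classes.ncard = (r.classes \ {A, B}).ncard + 2 := by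
    conv_lhs => rw [hclasses]
    rw [Set.ncard_insert_of_notMem, Set.ncard_insert_of_notMem fun hB => hB.2 (Or.inr rfl)]
    rintro (hA | hA)
    exacts [hAB hA, hA.2 (Or.inl rfl)]
  have hm : (r.merge u v).classes.ncard = (r.classes \ {A, B}).ncard + 1 := by
    rw [classes_merge, Set.ncard_insert_of_notMem fun hmem => hAB_mem hmem.1]
  omega

theorem ncard_classes_comap_equiv (e : α ≃ β) (r : Setoid β) :
    (r.comap e).classes.ncard = r.classes.ncard := by
  have : (r.comap e).classes = Set.preimage e '' r.classes := by
    ext s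
    constructor
    · rintro ⟨y, rfl⟩
      exact ⟨_, r.mem_classes (e y), rfl⟩
    · rintro ⟨_, ⟨y, rfl⟩, rfl⟩
      exact ⟨e.symm y, by simp [Set.preimage, comap_rel]⟩
  rw [this, Set.ncard_image_of_injective _ (Set.preimage_injective.2 e.surjective)]

end Setoid

open Equiv

section Residues

variable {V : Type*} {σ σ' : Fin 4 → Perm V} {I J : Set (Fin 4)} {c : Fin 4} {x y : V}

variable (σ I) in
def residueSetoid : Setoid V where
  r := SameResidue σ I
  iseqv :=
    ⟨fun _ => ⟨1, one_mem _, rfl⟩,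
      fun ⟨g, hg, hgx⟩ => ⟨g⁻¹, inv_mem hg, hgx ▸ g.symm_apply_apply _⟩,
      fun ⟨g, hg, hgx⟩ ⟨g', hg', hgy⟩ => ⟨g' * g, mul_mem hg' hg, by rw [Perm.mul_apply, hgx, hgy]⟩⟩

theorem sameResidue_apply (hc : c ∈ I) (x : V) : SameResidue σ I x (σ c x) :=
  ⟨σ c, Subgroup.subset_closure ⟨c, hc, rfl⟩, rfl⟩

theorem SameResidue.mono (h : SameResidue σ I x y) (hIJ : I ⊆ J) : SameResidue σ J x y :=
  let ⟨g, hg, hgx⟩ := h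
  ⟨g, Subgroup.closure_mono (Set.image_mono hIJ) hg, hgx⟩

@[simp]
theorem residueSetoid_apply : residueSetoid σ I x y ↔ SameResidue σ I x y := Iff.rfl

theorem residueSetoid_le {t : Setoid V} (h : ∀ c ∈ I, ∀ z, t z (σ c z)) :
    residueSetoid σ I ≤ t := by
  rintro x _ ⟨g, hg, rfl⟩
  refine Subgroup.closure_induction (p := fun g _ => ∀ z, t z (g z)) ?_ t.refl' ?_ ?_ hg x
  · rintro _ ⟨c, hc, rfl⟩
    exact h c hc
  · exact fun g g' _ _ ih ih' z => t.trans' (ih' z) (ih (g' z))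
  · exact fun g _ ih z => t.symm' (by simpa using ih (g⁻¹ z))

theorem numResidues_eq_ncard_classes (σ : Fin 4 → Perm V) (I : Set (Fin 4)) :
    numResidues σ I = (residueSetoid σ I).classes.ncard := by
  have hsymm : ∀ x, {y | SameResidue σ I x y} = {y | residueSetoid σ I y x} := fun _ =>
    Set.ext fun _ => ⟨(residueSetoid σ I).symm', (residueSetoid σ I).symm'⟩
  simp only [numResidues, residues, Setoid.classes, hsymm]

theorem numResidues_congr (h : ∀ c ∈ I, σ c = σ' c) : numResidues σ I = numResidues σ' I := by
  simp only [numResidues, residues, SameResidue, Set.image_congr h]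

theorem numResidues_conj (π : Perm V) :
    numResidues (fun c => π * σ c * π⁻¹) I = numResidues σ I := by
  have hconj : residueSetoid (fun c => π * σ c * π⁻¹) I = (residueSetoid σ I).comap π.symm := by
    refine le_antisymm (residueSetoid_le fun c hc z => ?_) fun x y hxy => ?_
    · simpa [Setoid.comap_rel] using sameResidue_apply hc (π.symm z)
    · have := residueSetoid_le (t := (residueSetoid _ I).comap π) (fun c hc z =>
        (Setoid.comap_rel _ _ _ _).2 (by
          simpa using sameResidue_apply (σ := fun c => π * σ c * π⁻¹) hc (π z))) hxy
      simpa [Setoid.comap_rel] using this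
  rw [numResidues_eq_ncard_classes, numResidues_eq_ncard_classes, hconj,
    Setoid.ncard_classes_comap_equiv]

end Residues

section Bipartite

variable {V : Type*} {σ : Fin 4 → Perm V} {ε : V → ZMod 2} {x y : V}

theorem parity_apply_apply (hbip : ∀ c x, ε (σ c x) ≠ ε x) (c d : Fin 4) (x : V) :
    ε (σ c (σ d x)) = ε x := by
  have key : ∀ a b c : ZMod 2, a ≠ b → b ≠ c → a = c := by decide
  exact key _ _ _ (hbip c _) (hbip d x)

theorem sameResidue_pair_iff_sameCycle [Finite V] (hinv : ∀ c x, σ c (σ c x) = x)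
    (hbip : ∀ c x, ε (σ c x) ≠ ε x) {c d : Fin 4} (hxy : ε x = ε y) :
    SameResidue σ {c, d} x y ↔ (σ c * σ d).SameCycle x y := by
  set ρ := σ c * σ d
  constructor
  · intro h
    -- `O z`, the union of the `ρ`-cycles through `z` and `σ d z`, is constant on `{c, d}`-residues
    let O : V → Set V := fun z => {w | ρ.SameCycle z w ∨ ρ.SameCycle (σ d z) w}
    have hO : residueSetoid σ {c, d} ≤ Setoid.ker O := by
      refine residueSetoid_le fun e he z => Setoid.ker_def.2 (Set.ext fun w => ?_)
      rcases he with rfl | rfl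
      · have h1 : ρ.SameCycle (σ e z) w ↔ ρ.SameCycle (σ d z) w := by
          rw [show σ e z = ρ (σ d z) by simp [ρ, hinv], Perm.sameCycle_apply_left]
        have h2 : ρ.SameCycle (σ d (σ e z)) w ↔ ρ.SameCycle z w := by
          conv_rhs => rw [show z = ρ (σ d (σ e z)) by simp [ρ, hinv]]
          rw [Perm.sameCycle_apply_left]
        simp only [O, Set.mem_ofPred_eq, h1, h2, or_comm]
      · simp only [O, Set.mem_ofPred_eq, hinv, or_comm]
    have hy : y ∈ O x := (Setoid.ker_def.1 (hO h)).symm ▸ Or.inl (Perm.SameCycle.refl ρ y)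
    obtain h | h := hy
    · exact h
    · exact absurd (h.eq_of_invariant (parity_apply_apply hbip c d)) (hxy ▸ hbip d x)
  · rintro ⟨n, rfl⟩
    exact ⟨ρ ^ n, zpow_mem (mul_mem
      (Subgroup.subset_closure (Set.mem_image_of_mem σ (Set.mem_insert c {d})))
      (Subgroup.subset_closure (Set.mem_image_of_mem σ (Set.mem_insert_of_mem c rfl)))) n, rfl⟩

end Bipartite

section Twisting

variable {V : Type*} [DecidableEq V] {σ : Fin 4 → Perm V} {ε : V → ZMod 2} {I : Set (Fin 4)}
  {i j c : Fin 4} {u v x : V}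

theorem jiTwisting_of_mem (hc : c = i ∨ c = j) :
    jiTwisting σ i j u v c = swap u v * σ c * swap u v := if_pos hc

theorem jiTwisting_of_not_mem (hc : ¬(c = i ∨ c = j)) : jiTwisting σ i j u v c = σ c := if_neg hc

theorem jiTwisting_jiTwisting : jiTwisting (jiTwisting σ i j u v) i j u v = σ := by
  funext c
  by_cases hc : c = i ∨ c = j
  · rw [jiTwisting_of_mem hc, jiTwisting_of_mem hc]
    ext x
    simp
  · rw [jiTwisting_of_not_mem hc, jiTwisting_of_not_mem hc]

theorem jiTwisting_apply_apply (hinv : ∀ c x, σ c (σ c x) = x) :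
    jiTwisting σ i j u v c (jiTwisting σ i j u v c x) = x := by
  by_cases hc : c = i ∨ c = j
  · simp [jiTwisting_of_mem hc, hinv]
  · simp [jiTwisting_of_not_mem hc, hinv]

theorem parity_swap (hε : ε u = ε v) (x : V) : ε (swap u v x) = ε x := by
  rcases eq_or_ne x u with rfl | hu
  · rw [swap_apply_left, hε]
  rcases eq_or_ne x v with rfl | hv
  · rw [swap_apply_right, hε]
  rw [swap_apply_of_ne_of_ne hu hv]

theorem parity_jiTwisting (hbip : ∀ c x, ε (σ c x) ≠ ε x) (hε : ε u = ε v) (c : Fin 4) (x : V) :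
    ε (jiTwisting σ i j u v c x) ≠ ε x := by
  by_cases hc : c = i ∨ c = j
  · simpa [jiTwisting_of_mem hc, parity_swap hε] using hbip c (swap u v x)
  · simpa [jiTwisting_of_not_mem hc] using hbip c x

theorem residueSetoid_jiTwisting_le {t : Setoid V} (hσ : residueSetoid σ I ≤ t) (huv : t u v) :
    residueSetoid (jiTwisting σ i j u v) I ≤ t := by
  have hswap : ∀ z, t z (swap u v z) := by
    intro z
    rcases eq_or_ne z u with rfl | hu
    · rwa [swap_apply_left]
    rcases eq_or_ne z v with rfl | hv
    · rw [swap_apply_right]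
      exact t.symm' huv
    exact (swap_apply_of_ne_of_ne hu hv).symm ▸ t.refl' z
  refine residueSetoid_le fun c hc z => ?_
  have hstep : ∀ w, t w (σ c w) := fun w => hσ (sameResidue_apply hc w)
  by_cases hcij : c = i ∨ c = j
  · rw [jiTwisting_of_mem hcij]
    exact t.trans' (hswap z) (t.trans' (hstep _) (hswap _))
  · rw [jiTwisting_of_not_mem hcij]
    exact hstep z

theorem residueSetoid_jiTwisting_eq_merge (h : SameResidue (jiTwisting σ i j u v) I u v) :
    residueSetoid (jiTwisting σ i j u v) I = (residueSetoid σ I).merge u v := by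
  refine le_antisymm (residueSetoid_jiTwisting_le Setoid.le_merge Setoid.merge_rel_left_right)
    (Setoid.merge_le ?_ h)
  simpa only [jiTwisting_jiTwisting] using
    residueSetoid_jiTwisting_le (σ := jiTwisting σ i j u v) (i := i) (j := j) le_rfl h

theorem residueSetoid_le_jiTwisting (h : SameResidue (jiTwisting σ i j u v) I u v) :
    residueSetoid σ I ≤ residueSetoid (jiTwisting σ i j u v) I := by
  rw [residueSetoid_jiTwisting_eq_merge h]
  exact Setoid.le_merge

theorem numResidues_eq_numResidues_jiTwisting_add_one [Finite V]
    (h' : SameResidue (jiTwisting σ i j u v) I u v) (h : ¬ SameResidue σ I u v) :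
    numResidues σ I = numResidues (jiTwisting σ i j u v) I + 1 := by
  rw [numResidues_eq_ncard_classes, numResidues_eq_ncard_classes,
    residueSetoid_jiTwisting_eq_merge h']
  exact Setoid.ncard_classes_merge h

theorem numResidues_jiTwisting_eq_add_one [Finite V] (h : SameResidue σ I u v)
    (h' : ¬ SameResidue (jiTwisting σ i j u v) I u v) :
    numResidues (jiTwisting σ i j u v) I = numResidues σ I + 1 := by
  have h'' : SameResidue (jiTwisting (jiTwisting σ i j u v) i j u v) I u v := by
    rwa [jiTwisting_jiTwisting]
  have := numResidues_eq_numResidues_jiTwisting_add_one h'' h'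
  rwa [jiTwisting_jiTwisting] at this

theorem numResidues_jiTwisting_of_sameResidue (h' : SameResidue (jiTwisting σ i j u v) I u v)
    (h : SameResidue σ I u v) : numResidues (jiTwisting σ i j u v) I = numResidues σ I := by
  rw [numResidues_eq_ncard_classes, numResidues_eq_ncard_classes,
    residueSetoid_jiTwisting_eq_merge h', Setoid.merge_eq_self h]

theorem numResidues_jiTwisting_of_disjoint (hI : Disjoint I {i, j}) :
    numResidues (jiTwisting σ i j u v) I = numResidues σ I :=
  numResidues_congr fun _ hc => jiTwisting_of_not_mem (Set.disjoint_left.1 hI hc)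

theorem numResidues_jiTwisting_of_subset (hI : I ⊆ {i, j}) :
    numResidues (jiTwisting σ i j u v) I = numResidues σ I := by
  rw [numResidues_congr (σ' := fun c => swap u v * σ c * (swap u v)⁻¹) fun c hc => by
    rw [jiTwisting_of_mem (hI hc), swap_inv], numResidues_conj]

theorem sameResidue_jiTwisting_pair_iff [Finite V] (hinv : ∀ c x, σ c (σ c x) = x)
    (hbip : ∀ c x, ε (σ c x) ≠ ε x) (hε : ε u = ε v) (huv : u ≠ v) {c d : Fin 4}
    (hc : ¬(c = i ∨ c = j)) (hd : d = i ∨ d = j) :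
    SameResidue (jiTwisting σ i j u v) {c, d} u v ↔ ¬ SameResidue σ {c, d} u v := by
  rw [sameResidue_pair_iff_sameCycle (fun _ _ => jiTwisting_apply_apply hinv)
      (parity_jiTwisting hbip hε) hε, sameResidue_pair_iff_sameCycle hinv hbip hε,
    ← Perm.sameCycle_mul_swap_iff huv, jiTwisting_of_not_mem hc, jiTwisting_of_mem hd]
  -- for `z` of the parity of `u`, `σ d (swap u v z)` has the other parity, so `swap u v` fixes it
  refine Perm.sameCycle_iff_of_eqOn (s := {z | ε z = ε u}) (fun z hz => ?_) (fun z hz => ?_) rfl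
  · have := parity_apply_apply (parity_jiTwisting (i := i) (j := j) hbip hε) c d z
    rw [jiTwisting_of_not_mem hc, jiTwisting_of_mem hd] at this
    exact this.trans hz
  · have hw : ε (σ d (swap u v z)) ≠ ε u := by
      rw [← hz, ← parity_swap hε z]
      exact hbip d _
    simp only [Perm.mul_apply]
    rw [swap_apply_of_ne_of_ne (fun h => hw (by rw [h])) (fun h => hw (by rw [h, hε]))]

end Twisting

section Gem

variable {V : Type*} {σ : Fin 4 → Perm V} {i j k : Fin 4} {u v : V}

theorem distinct_of_finset_eq (h : ({i, j, k} : Finset (Fin 4)) = {1, 2, 3}) :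
    i ≠ 0 ∧ j ≠ 0 ∧ k ≠ 0 ∧ i ≠ j ∧ i ≠ k ∧ j ≠ k := by
  revert i j k
  decide

theorem eq_perm_of_finset_eq (h : ({i, j, k} : Finset (Fin 4)) = {1, 2, 3}) :
    (i = 1 ∧ j = 2 ∧ k = 3) ∨ (i = 1 ∧ j = 3 ∧ k = 2) ∨ (i = 2 ∧ j = 1 ∧ k = 3) ∨
      (i = 2 ∧ j = 3 ∧ k = 1) ∨ (i = 3 ∧ j = 1 ∧ k = 2) ∨ (i = 3 ∧ j = 2 ∧ k = 1) := by
  revert i j k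
  decide

theorem bCount_eq_of_perm (σ : Fin 4 → Perm V) (h : ({i, j, k} : Finset (Fin 4)) = {1, 2, 3}) :
    bCount σ = numResidues σ {0, i} + numResidues σ {0, j} + numResidues σ {0, k} +
      numResidues σ {i, j} + numResidues σ {k, i} + numResidues σ {k, j} := by
  have hpairs : Finset.univ.filter (fun p : Fin 4 × Fin 4 => p.1 < p.2) =
      {(0, 1), (0, 2), (0, 3), (1, 2), (1, 3), (2, 3)} := by decide
  rw [bCount, hpairs]
  simp (disch := decide) only [Finset.sum_insert, Finset.sum_singleton]
  rcases eq_perm_of_finset_eq h with ⟨rfl, rfl, rfl⟩ | ⟨rfl, rfl, rfl⟩ | ⟨rfl, rfl, rfl⟩ |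
    ⟨rfl, rfl, rfl⟩ | ⟨rfl, rfl, rfl⟩ | ⟨rfl, rfl, rfl⟩ <;>
  simp only [Set.pair_comm] <;> omega

theorem sameResidue_compl_singleton_of_disjoint {I₁ I₂ : Set (Fin 4)}
    (h₁ : SameResidue σ I₁ u v) (h₂ : SameResidue σ I₂ u v) (hI : Disjoint I₁ I₂) (c : Fin 4) :
    SameResidue σ {c}ᶜ u v := by
  by_cases hc : c ∈ I₁
  · exact h₂.mono (Set.subset_compl_singleton_iff.2 (hI.notMem_of_mem_left hc))
  · exact h₁.mono (Set.subset_compl_singleton_iff.2 hc)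

variable [DecidableEq V]

theorem tCount_jiTwisting (hσ : ∀ c, SameResidue σ {c}ᶜ u v)
    (hσ' : ∀ c, SameResidue (jiTwisting σ i j u v) {c}ᶜ u v) :
    tCount (jiTwisting σ i j u v) = tCount σ :=
  Finset.sum_congr rfl fun c _ => numResidues_jiTwisting_of_sameResidue (hσ' c) (hσ c)

theorem bCount_jiTwisting [Finite V] (h : ({i, j, k} : Finset (Fin 4)) = {1, 2, 3})
    (h0j : SameResidue σ {0, j} u v) (hki : SameResidue σ {k, i} u v)
    (hn0i : ¬ SameResidue σ {0, i} u v) (hnkj : ¬ SameResidue σ {k, j} u v)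
    (h0i' : SameResidue (jiTwisting σ i j u v) {0, i} u v)
    (hkj' : SameResidue (jiTwisting σ i j u v) {k, j} u v)
    (hn0j' : ¬ SameResidue (jiTwisting σ i j u v) {0, j} u v)
    (hnki' : ¬ SameResidue (jiTwisting σ i j u v) {k, i} u v) :
    bCount (jiTwisting σ i j u v) = bCount σ := by
  obtain ⟨hi, hj, hk, hij, hik, hjk⟩ := distinct_of_finset_eq h
  have e0i := numResidues_eq_numResidues_jiTwisting_add_one h0i' hn0i
  have ekj := numResidues_eq_numResidues_jiTwisting_add_one hkj' hnkj
  have e0j := numResidues_jiTwisting_eq_add_one h0j hn0j'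
  have eki := numResidues_jiTwisting_eq_add_one hki hnki'
  have e0k : numResidues (jiTwisting σ i j u v) {0, k} = numResidues σ {0, k} :=
    numResidues_jiTwisting_of_disjoint (by grind)
  have eij : numResidues (jiTwisting σ i j u v) {i, j} = numResidues σ {i, j} :=
    numResidues_jiTwisting_of_subset subset_rfl
  rw [bCount_eq_of_perm _ h, bCount_eq_of_perm _ h]
  omega

end Gem

theorem jiTwisting_isGem_general {V : Type*} [Fintype V] [DecidableEq V]
    (σ : Fin 4 → Equiv.Perm V) (ε : V → ZMod 2)
    (hgem : IsGem σ) (hbip : ∀ (c : Fin 4) (x : V), ε (σ c x) ≠ ε x)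
    (i j k : Fin 4) (hperm : ({i, j, k} : Finset (Fin 4)) = ({1, 2, 3} : Finset (Fin 4)))
    (u v : V) (htw : IsTwistor σ ε j i k u v) :
    IsGem (jiTwisting σ i j u v) ∧
    ∀ (c : Fin 4) (x : V), ε (jiTwisting σ i j u v c x) ≠ ε x := by
  obtain ⟨⟨hfpf, hconn⟩, hcard⟩ := hgem
  have hinv : ∀ c x, σ c (σ c x) = x := fun c => (hfpf c).2
  obtain ⟨huv, hε, h0j, hki, hn0i, hnkj, -, -⟩ := htw
  rw [Set.pair_comm] at hki hnkj
  obtain ⟨hi, hj, hk, hij, hik, hjk⟩ := distinct_of_finset_eq hperm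
  have pair {c d : Fin 4} (hc : ¬(c = i ∨ c = j)) (hd : d = i ∨ d = j) :=
    sameResidue_jiTwisting_pair_iff hinv hbip hε huv hc hd
  have h0 : ¬((0 : Fin 4) = i ∨ 0 = j) := by grind
  have hk' : ¬(k = i ∨ k = j) := by grind
  have h0i' := (pair h0 (Or.inl rfl)).2 hn0i
  have hkj' := (pair hk' (Or.inr rfl)).2 hnkj
  refine ⟨⟨⟨fun c => ⟨fun x h => parity_jiTwisting hbip hε c x (by rw [h]),
      fun _ => jiTwisting_apply_apply hinv⟩,
    fun x y => residueSetoid_le_jiTwisting (h0i'.mono (Set.subset_univ _)) (hconn x y)⟩, ?_⟩,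
    parity_jiTwisting hbip hε⟩
  rw [tCount_jiTwisting (sameResidue_compl_singleton_of_disjoint h0j hki (by grind))
      (sameResidue_compl_singleton_of_disjoint h0i' hkj' (by grind)),
    bCount_jiTwisting hperm h0j hki hn0i hnkj h0i' hkj' (fun h => (pair h0 (Or.inr rfl)).1 h h0j)
      (fun h => (pair hk' (Or.inl rfl)).1 h hki)]
  exact hcard

/-- Let `G` be a bipartite 3-gem, `(i,j,k)` a permutation of `(1,2,3)`,
and `{u,v}` a `j`-twistor of `G`. Then the `ji`-twisting of `G` at `{u,v}` is again a
bipartite 3-gem, and the same parity map `ε` exhibits it as bipartite. -/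
theorem jiTwisting_isGem {V : Type*} [Fintype V] [DecidableEq V] [Nonempty V]
    (σ : Fin 4 → Equiv.Perm V) (ε : V → ZMod 2)
    (hgem : IsGem σ) (hbip : ∀ (c : Fin 4) (x : V), ε (σ c x) ≠ ε x)
    (i j k : Fin 4) (hperm : ({i, j, k} : Finset (Fin 4)) = ({1, 2, 3} : Finset (Fin 4)))
    (u v : V) (htw : IsTwistor σ ε j i k u v) :
    IsGem (jiTwisting σ i j u v) ∧
    ∀ (c : Fin 4) (x : V), ε (jiTwisting σ i j u v c x) ≠ ε x :=
  jiTwisting_isGem_general σ ε hgem hbip i j k hperm u v htw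
end

section
/- Let G be a bipartite 3-gem, let (i,j,k) be a permutation of (1,2,3), and let {u,v} be a j-twistor of G. Then the ji-twisting of G at {u,v} has exactly one fewer {j,k}-residue than G, i.e., b_jk(G') = b_jk(G) − 1 where G' denotes the twisted graph: the two distinct {j,k}-gons of G containing u and v merge into a single {j,k}-gon of G', and all other {j,k}-gons are unaffected. -/
/-!
Put `a = σ j`, `b = σ k`, `τ = swap u v` and `a' = τ a τ`, so that the `{j,k}`-gons before and
after the twisting are the orbits of `⟨a, b⟩` and of `⟨a', b⟩`. As `a` and `a'` are conjugate by
`τ`, a set invariant under one pair is invariant under the other as soon as it contains both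
`u` and `v` or neither. Hence orbits avoiding `u` and `v` are unchanged, and the new orbits of
`u` and `v` together make up `A ∪ B`, where `A` and `B` are the old ones. It remains to see that
`u` and `v` become joined. Otherwise `E = O'(u) ∩ B`, with `O'(u)` the new orbit of `u`, contains
`a v = a' u` and is `b`-invariant, while `E \ {a v}` is `a`-invariant; but a fixed-point-free
involution only preserves sets of even size.
-/

section Twisting

open Equiv MulAction Set Pointwise

theorem Set.ncard_insert_sdiff_pair {β : Type*} {P : Set β} {x y z : β} (hP : P.Finite)
    (hx : x ∈ P) (hy : y ∈ P) (hxy : x ≠ y) (hz : z ∉ P) :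
    (insert z (P \ {x, y})).ncard = P.ncard - 1 := by
  have hsub : ({x, y} : Set β) ⊆ P := pair_subset hx hy
  have htwo : 2 ≤ P.ncard := ncard_pair hxy ▸ ncard_le_ncard hsub hP
  rw [ncard_insert_of_notMem (fun h => hz h.1) (hP.subset sdiff_subset),
    ncard_sdiff hsub (hP.subset hsub), ncard_pair hxy]
  omega

variable {V : Type*}

theorem IsFPFInvolution.even_ncard_of_mapsTo [Finite V] {f : Perm V} (hf : IsFPFInvolution f)
    {C : Set V} (hC : MapsTo f C C) : Even C.ncard := by
  classical
  have : Fintype C := Fintype.ofFinite C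
  let g : Function.End C := hC.restrict
  have hg : g ^ 2 ^ 1 = 1 := funext fun x => Subtype.ext (hf.2 x)
  have hfix : Fintype.card g.fixedPoints = 0 := by
    rw [Fintype.card_eq_zero_iff]
    exact ⟨fun x => hf.1 x.1.1 (congrArg Subtype.val x.2)⟩
  have : Fact (Nat.Prime 2) := ⟨Nat.prime_two⟩
  have := Equiv.Perm.card_fixedPoints_modEq hg
  rw [hfix, Nat.ModEq, Nat.zero_mod, ← Nat.even_iff] at this
  rwa [ncard_eq_toFinset_card', Set.toFinset_card]

theorem orbit_closure_subset_of_mapsTo [Finite V] {S : Set (Perm V)} {C : Set V}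
    (hS : ∀ s ∈ S, MapsTo s C C) {x : V} (hx : x ∈ C) :
    orbit (Subgroup.closure S) x ⊆ C := by
  have hle : Subgroup.closure S ≤ stabilizer (Perm V) C := by
    refine (Subgroup.closure_le _).2 fun s hs => ?_
    exact ((C.toFinite.injOn_iff_bijOn_of_mapsTo (hS s hs)).1 s.injective.injOn).image_eq
  rintro _ ⟨g, rfl⟩
  have : (g : Perm V) • C = C := hle g.2
  rw [← this]
  exact smul_mem_smul_set hx

theorem mapsTo_orbit_closure {S : Set (Perm V)} {s : Perm V} (hs : s ∈ S) (x : V) :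
    MapsTo s (orbit (Subgroup.closure S) x) (orbit (Subgroup.closure S) x) := by
  rintro _ ⟨g, rfl⟩
  exact ⟨⟨s, Subgroup.subset_closure hs⟩ * g, mul_smul _ _ _⟩

theorem mapsTo_orbit_pair_left (a b : Perm V) (x : V) :
    MapsTo a (orbit (Subgroup.closure {a, b}) x) (orbit (Subgroup.closure {a, b}) x) :=
  mapsTo_orbit_closure (mem_insert a {b}) x

theorem mapsTo_orbit_pair_right (a b : Perm V) (x : V) :
    MapsTo b (orbit (Subgroup.closure {a, b}) x) (orbit (Subgroup.closure {a, b}) x) :=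
  mapsTo_orbit_closure (mem_insert_of_mem a (mem_singleton b)) x

theorem orbit_pair_subset_of_mapsTo [Finite V] {a b : Perm V} {C : Set V}
    (ha : MapsTo a C C) (hb : MapsTo b C C) {x : V} (hx : x ∈ C) :
    orbit (Subgroup.closure {a, b}) x ⊆ C :=
  orbit_closure_subset_of_mapsTo (by rintro s (rfl | rfl) <;> assumption) hx

section SwapConj

variable [DecidableEq V] {u v : V}

theorem swap_conj_apply_left (f : Perm V) : (swap u v * f * swap u v) u = swap u v (f v) := by
  simp [Perm.mul_apply]

theorem swap_conj_apply_of_ne {f : Perm V} {x : V} (hu : x ≠ u) (hv : x ≠ v)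
    (hfu : f x ≠ u) (hfv : f x ≠ v) : (swap u v * f * swap u v) x = f x := by
  simp [Perm.mul_apply, swap_apply_of_ne_of_ne, *]

theorem swap_conj_swap_conj (f : Perm V) : swap u v * (swap u v * f * swap u v) * swap u v = f := by
  simp [mul_assoc]

theorem mapsTo_swap_conj {f : Perm V} {C : Set V} (hu : u ∈ C) (hv : v ∈ C) (hf : MapsTo f C C) :
    MapsTo (swap u v * f * swap u v) C C := by
  have hτ : MapsTo (swap u v) C C := fun x hx => by
    rw [swap_apply_def]
    split_ifs <;> assumption
  simpa only [Perm.coe_mul] using (hτ.comp hf).comp hτ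

theorem eqOn_swap_conj {f : Perm V} {C : Set V} (hu : u ∉ C) (hv : v ∉ C) (hf : MapsTo f C C) :
    EqOn (swap u v * f * swap u v) f C := fun _ hx =>
  swap_conj_apply_of_ne (ne_of_mem_of_not_mem hx hu) (ne_of_mem_of_not_mem hx hv)
    (ne_of_mem_of_not_mem (hf hx) hu) (ne_of_mem_of_not_mem (hf hx) hv)

end SwapConj

section OrbitSwapConj

variable [Finite V] [DecidableEq V] {a b : Perm V} {u v : V}

theorem orbit_swap_conj_subset_union {x : V}
    (hx : x ∈ orbit (Subgroup.closure {a, b}) u ∪ orbit (Subgroup.closure {a, b}) v) :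
    orbit (Subgroup.closure {swap u v * a * swap u v, b}) x ⊆
      orbit (Subgroup.closure {a, b}) u ∪ orbit (Subgroup.closure {a, b}) v :=
  orbit_pair_subset_of_mapsTo
    (mapsTo_swap_conj (mem_union_left _ (mem_orbit_self u)) (mem_union_right _ (mem_orbit_self v))
      ((mapsTo_orbit_pair_left a b u).union_union (mapsTo_orbit_pair_left a b v)))
    ((mapsTo_orbit_pair_right a b u).union_union (mapsTo_orbit_pair_right a b v)) hx

theorem orbit_swap_conj_subset_of_notMem {x : V} (hu : u ∉ orbit (Subgroup.closure {a, b}) x)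
    (hv : v ∉ orbit (Subgroup.closure {a, b}) x) :
    orbit (Subgroup.closure {swap u v * a * swap u v, b}) x ⊆ orbit (Subgroup.closure {a, b}) x :=
  orbit_pair_subset_of_mapsTo
    ((mapsTo_orbit_pair_left a b x).congr
      (eqOn_swap_conj hu hv (mapsTo_orbit_pair_left a b x)).symm)
    (mapsTo_orbit_pair_right a b x) (mem_orbit_self x)

theorem orbit_subset_union_orbit_swap_conj {x : V}
    (hx : x ∈ orbit (Subgroup.closure {swap u v * a * swap u v, b}) u ∪
      orbit (Subgroup.closure {swap u v * a * swap u v, b}) v) :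
    orbit (Subgroup.closure {a, b}) x ⊆
      orbit (Subgroup.closure {swap u v * a * swap u v, b}) u ∪
        orbit (Subgroup.closure {swap u v * a * swap u v, b}) v := by
  have h := orbit_swap_conj_subset_union (a := swap u v * a * swap u v) hx
  rwa [swap_conj_swap_conj] at h

theorem orbit_subset_orbit_swap_conj_of_notMem {x : V}
    (hu : u ∉ orbit (Subgroup.closure {swap u v * a * swap u v, b}) x)
    (hv : v ∉ orbit (Subgroup.closure {swap u v * a * swap u v, b}) x) :
    orbit (Subgroup.closure {a, b}) x ⊆
      orbit (Subgroup.closure {swap u v * a * swap u v, b}) x := by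
  have h := orbit_swap_conj_subset_of_notMem (a := swap u v * a * swap u v) hu hv
  rwa [swap_conj_swap_conj] at h

theorem mem_orbit_swap_conj (ha : IsFPFInvolution a) (hb : IsFPFInvolution b)
    (huv : v ∉ orbit (Subgroup.closure {a, b}) u) :
    v ∈ orbit (Subgroup.closure {swap u v * a * swap u v, b}) u := by
  by_contra hv
  set E := orbit (Subgroup.closure {swap u v * a * swap u v, b}) u ∩
    orbit (Subgroup.closure {a, b}) v
  have hvu : u ∉ orbit (Subgroup.closure {a, b}) v := fun h => huv (mem_orbit_symm.1 h)
  have hav : a v ∈ E := by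
    have hav_mem : a v ∈ orbit (Subgroup.closure {a, b}) v :=
      mapsTo_orbit_pair_left a b v (mem_orbit_self v)
    refine ⟨?_, hav_mem⟩
    rw [← swap_apply_of_ne_of_ne (ne_of_mem_of_not_mem hav_mem hvu) (ha.1 v),
      ← swap_conj_apply_left]
    exact mapsTo_orbit_pair_left _ b u (mem_orbit_self u)
  have hbE : MapsTo b E E :=
    (mapsTo_orbit_pair_right _ b u).inter_inter (mapsTo_orbit_pair_right a b v)
  have haE : MapsTo a (E \ {a v}) (E \ {a v}) := by
    rintro y ⟨⟨hy', hy⟩, hya⟩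
    have hay : a y ∈ orbit (Subgroup.closure {a, b}) v := mapsTo_orbit_pair_left a b v hy
    have hyv : y ≠ v := fun h => hv (h ▸ hy')
    have hayv : a y ≠ v := fun h => hya (mem_singleton_iff.2 (by rw [← h, ha.2]))
    have heq : (swap u v * a * swap u v) y = a y :=
      swap_conj_apply_of_ne (ne_of_mem_of_not_mem hy hvu) hyv (ne_of_mem_of_not_mem hay hvu) hayv
    exact ⟨⟨heq ▸ mapsTo_orbit_pair_left _ b u hy', hay⟩, fun h => hyv (a.injective h)⟩
  have hodd := (ha.even_ncard_of_mapsTo haE).add_one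
  rw [ncard_sdiff_singleton_add_one hav] at hodd
  exact Nat.not_even_iff_odd.2 hodd (hb.even_ncard_of_mapsTo hbE)

theorem orbit_swap_conj_left (ha : IsFPFInvolution a) (hb : IsFPFInvolution b)
    (huv : v ∉ orbit (Subgroup.closure {a, b}) u) :
    orbit (Subgroup.closure {swap u v * a * swap u v, b}) u =
      orbit (Subgroup.closure {a, b}) u ∪ orbit (Subgroup.closure {a, b}) v := by
  refine (orbit_swap_conj_subset_union (mem_union_left _ (mem_orbit_self u))).antisymm ?_
  have hvu : orbit (Subgroup.closure {swap u v * a * swap u v, b}) v =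
      orbit (Subgroup.closure {swap u v * a * swap u v, b}) u :=
    orbit_eq_iff.2 (mem_orbit_swap_conj ha hb huv)
  have hback (x : V) :=
    orbit_subset_union_orbit_swap_conj (a := a) (b := b) (u := u) (v := v) (x := x)
  rw [hvu, union_self] at hback
  exact union_subset (hback u (mem_orbit_self u)) (hback v (hvu ▸ mem_orbit_self v))

theorem orbit_swap_conj_of_notMem (ha : IsFPFInvolution a) (hb : IsFPFInvolution b)
    (huv : v ∉ orbit (Subgroup.closure {a, b}) u) {x : V}
    (hx : x ∉ orbit (Subgroup.closure {a, b}) u ∪ orbit (Subgroup.closure {a, b}) v) :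
    orbit (Subgroup.closure {swap u v * a * swap u v, b}) x =
      orbit (Subgroup.closure {a, b}) x := by
  have hmerge := orbit_swap_conj_left ha hb huv
  have hvu := orbit_eq_iff.2 (mem_orbit_swap_conj ha hb huv)
  refine (orbit_swap_conj_subset_of_notMem ?_ ?_).antisymm
    (orbit_subset_orbit_swap_conj_of_notMem (fun h => hx ?_) (fun h => hx ?_))
  · exact fun h => hx (mem_union_left _ (mem_orbit_symm.1 h))
  · exact fun h => hx (mem_union_right _ (mem_orbit_symm.1 h))
  · rw [← hmerge]; exact mem_orbit_symm.1 h
  · rw [← hmerge, ← hvu]; exact mem_orbit_symm.1 h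

end OrbitSwapConj

section OrbitCount

variable [Finite V] [DecidableEq V] {a b : Perm V} {u v : V}

theorem range_orbit_swap_conj (ha : IsFPFInvolution a) (hb : IsFPFInvolution b)
    (huv : v ∉ orbit (Subgroup.closure {a, b}) u) :
    range (fun x : V => orbit (Subgroup.closure {swap u v * a * swap u v, b}) x) =
      insert (orbit (Subgroup.closure {a, b}) u ∪ orbit (Subgroup.closure {a, b}) v)
        (range (fun x : V => orbit (Subgroup.closure {a, b}) x) \
          {orbit (Subgroup.closure {a, b}) u, orbit (Subgroup.closure {a, b}) v}) := by
  ext O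
  constructor
  · rintro ⟨x, rfl⟩
    by_cases hx : x ∈ orbit (Subgroup.closure {a, b}) u ∪ orbit (Subgroup.closure {a, b}) v
    · left
      rwa [← orbit_swap_conj_left ha hb huv, orbit_eq_iff, orbit_swap_conj_left ha hb huv]
    · refine Or.inr ⟨⟨x, (orbit_swap_conj_of_notMem ha hb huv hx).symm⟩, ?_⟩
      rintro (h | h) <;>
        simp only [orbit_swap_conj_of_notMem ha hb huv hx, mem_singleton_iff, orbit_eq_iff] at h
      exacts [hx (mem_union_left _ h), hx (mem_union_right _ h)]
  · rintro (rfl | ⟨⟨x, rfl⟩, hx⟩)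
    · exact ⟨u, orbit_swap_conj_left ha hb huv⟩
    · refine ⟨x, orbit_swap_conj_of_notMem ha hb huv fun h => hx ?_⟩
      rcases h with h | h
      exacts [Or.inl (orbit_eq_iff.2 h), Or.inr (orbit_eq_iff.2 h)]

theorem ncard_range_orbit_swap_conj (ha : IsFPFInvolution a) (hb : IsFPFInvolution b)
    (huv : v ∉ orbit (Subgroup.closure {a, b}) u) :
    (range fun x : V => orbit (Subgroup.closure {swap u v * a * swap u v, b}) x).ncard =
      (range fun x : V => orbit (Subgroup.closure {a, b}) x).ncard - 1 := by
  rw [range_orbit_swap_conj ha hb huv]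
  refine ncard_insert_sdiff_pair (toFinite _) (mem_range_self u) (mem_range_self v)
    (fun h => huv (orbit_eq_iff.1 h.symm)) ?_
  rintro ⟨x, hx : orbit (Subgroup.closure {a, b}) x = _⟩
  have hu : u ∈ orbit (Subgroup.closure {a, b}) x := hx ▸ mem_union_left _ (mem_orbit_self u)
  have hv : v ∈ orbit (Subgroup.closure {a, b}) x := hx ▸ mem_union_right _ (mem_orbit_self v)
  exact huv (orbit_eq_iff.2 hu ▸ hv)

end OrbitCount

theorem sameResidue_iff_mem_orbit {σ : Fin 4 → Perm V} {I : Set (Fin 4)} {x y : V} :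
    SameResidue σ I x y ↔ y ∈ orbit (Subgroup.closure (σ '' I)) x :=
  ⟨fun ⟨g, hg, hgx⟩ => ⟨⟨g, hg⟩, hgx⟩, fun ⟨g, hgx⟩ => ⟨g, g.2, hgx⟩⟩

theorem setOf_sameResidue_eq_orbit (σ : Fin 4 → Perm V) (I : Set (Fin 4)) (x : V) :
    {y | SameResidue σ I x y} = orbit (Subgroup.closure (σ '' I)) x :=
  ext fun _ => sameResidue_iff_mem_orbit

theorem residues_eq_range_orbit (σ : Fin 4 → Perm V) (I : Set (Fin 4)) :
    residues σ I = range fun x : V => orbit (Subgroup.closure (σ '' I)) x := by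
  ext O
  refine exists_congr fun x => ?_
  rw [setOf_sameResidue_eq_orbit, eq_comm]

theorem jiTwisting_apply_right [DecidableEq V] (σ : Fin 4 → Perm V) (i j : Fin 4) (u v : V) :
    jiTwisting σ i j u v j = swap u v * σ j * swap u v :=
  if_pos (Or.inr rfl)

theorem jiTwisting_apply_of_ne [DecidableEq V] (σ : Fin 4 → Perm V) {i j c : Fin 4} (u v : V)
    (hi : c ≠ i) (hj : c ≠ j) : jiTwisting σ i j u v c = σ c :=
  if_neg (not_or.2 ⟨hi, hj⟩)

end Twisting

theorem jiTwisting_merges_jk_gons_general {V : Type*} [Fintype V] [DecidableEq V]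
    (σ : Fin 4 → Equiv.Perm V) (ε : V → ZMod 2)
    (hgem : IsGem σ)
    (i j k : Fin 4) (hperm : ({i, j, k} : Finset (Fin 4)) = ({1, 2, 3} : Finset (Fin 4)))
    (u v : V) (htw : IsTwistor σ ε j i k u v) :
    numResidues (jiTwisting σ i j u v) ({j, k} : Set (Fin 4)) =
      numResidues σ ({j, k} : Set (Fin 4)) - 1 ∧
    {y | SameResidue (jiTwisting σ i j u v) ({j, k} : Set (Fin 4)) u y} =
      {y | SameResidue σ ({j, k} : Set (Fin 4)) u y} ∪
        {y | SameResidue σ ({j, k} : Set (Fin 4)) v y} ∧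
    ∀ R ∈ residues σ ({j, k} : Set (Fin 4)), u ∉ R → v ∉ R →
      R ∈ residues (jiTwisting σ i j u v) ({j, k} : Set (Fin 4)) := by
  obtain ⟨hki, hkj⟩ : k ≠ i ∧ k ≠ j := by
    revert hperm; fin_cases i <;> fin_cases j <;> fin_cases k <;> decide
  have ha := hgem.1.1 j
  have hb := hgem.1.1 k
  have huv := htw.2.2.2.2.2.1
  rw [sameResidue_iff_mem_orbit, Set.image_pair] at huv
  simp only [numResidues, residues_eq_range_orbit, setOf_sameResidue_eq_orbit]
  rw [Set.image_pair, Set.image_pair, jiTwisting_apply_right, jiTwisting_apply_of_ne σ u v hki hkj]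
  refine ⟨ncard_range_orbit_swap_conj ha hb huv, orbit_swap_conj_left ha hb huv, ?_⟩
  rintro _ ⟨x, rfl⟩ hu hv
  refine ⟨x, orbit_swap_conj_of_notMem ha hb huv ?_⟩
  rintro (h | h)
  exacts [hu (MulAction.mem_orbit_symm.1 h), hv (MulAction.mem_orbit_symm.1 h)]

/-- Let `G` be a bipartite 3-gem, `(i,j,k)` a permutation of `(1,2,3)`,
and `{u,v}` a `j`-twistor of `G`. Then the `ji`-twisting `G'` of `G` at `{u,v}` has
exactly one fewer `{j,k}`-residue than `G`: `b_jk(G') = b_jk(G) - 1`; the two distinct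
`{j,k}`-gons of `G` containing `u` and `v` merge into a single `{j,k}`-gon of `G'`, and
all other `{j,k}`-gons are unaffected. -/
theorem jiTwisting_merges_jk_gons {V : Type*} [Fintype V] [DecidableEq V] [Nonempty V]
    (σ : Fin 4 → Equiv.Perm V) (ε : V → ZMod 2)
    (hgem : IsGem σ) (hbip : ∀ (c : Fin 4) (x : V), ε (σ c x) ≠ ε x)
    (i j k : Fin 4) (hperm : ({i, j, k} : Finset (Fin 4)) = ({1, 2, 3} : Finset (Fin 4)))
    (u v : V) (htw : IsTwistor σ ε j i k u v) :
    numResidues (jiTwisting σ i j u v) ({j, k} : Set (Fin 4)) =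
      numResidues σ ({j, k} : Set (Fin 4)) - 1 ∧
    {y | SameResidue (jiTwisting σ i j u v) ({j, k} : Set (Fin 4)) u y} =
      {y | SameResidue σ ({j, k} : Set (Fin 4)) u y} ∪
        {y | SameResidue σ ({j, k} : Set (Fin 4)) v y} ∧
    ∀ R ∈ residues σ ({j, k} : Set (Fin 4)), u ∉ R → v ∉ R →
      R ∈ residues (jiTwisting σ i j u v) ({j, k} : Set (Fin 4)) :=
  jiTwisting_merges_jk_gons_general σ ε hgem i j k hperm u v htw
end
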